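/- The iterated-integral series solves the parallel transport equation: let A be a unital Banach algebra over ℝ and f : ℝ → A continuous; define T : [0,∞) → A by T(x) = Σ_{k≥0} ∫_{0 ≤ t₁ ≤ ⋯ ≤ t_k ≤ x} f(t_k)·f(t_{k−1})⋯f(t₁) dt (the k = 0 term being 1, the k-th term a Bochner integral over the simplex {t ∈ ℝᵏ : 0 ≤ t₁ ≤ ⋯ ≤ t_k ≤ x}). Then the series converges absolutely for every x ≥ 0, T(0) = 1, and T is differentiable with T'(x) = f(x)·T(x) for all x ≥ 0. (This identifies the series Θ(γ) = Id + ∫ω + ∫ωω + ∫ωωω + ⋯ from parallel transport with the solution of the transport differential equation, where f is the pullback of a connection 1-form along a path γ.) -/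

import Mathlib

open MeasureTheory

variable {A : Type*} [NormedRing A] [NormedAlgebra ℝ A] [CompleteSpace A]

/-- The simplex `{t : ℝᵏ | a ≤ t 0 ≤ t 1 ≤ ⋯ ≤ t (k-1) ≤ b}`. -/
def simplexSet (k : ℕ) (a b : ℝ) : Set (Fin k → ℝ) :=
  {t | Monotone t ∧ ∀ i, t i ∈ Set.Icc a b}

/-- The iterated integral `I(f₁, …, f_k; a, b)` of a list of functions `fs = [f₁, …, f_k]`,
as a Bochner integral of the (noncommutative, ordered) product `f₁ (t₁) ⋯ f_k (t_k)` over
the simplex `a ≤ t₁ ≤ ⋯ ≤ t_k ≤ b` with respect to Lebesgue measure.  For `k = 0` this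
is the integral of the empty product `1` over the one-point space `Fin 0 → ℝ` of total
measure `1`, i.e. it equals `1`. -/
noncomputable def iterInt (fs : List (ℝ → A)) (a b : ℝ) : A :=
  ∫ t in simplexSet fs.length a b, (List.ofFn fun i => fs.get i (t i)).prod

/-- The `k`-th term of the parallel transport series: the Bochner integral of the
reversed ordered product `f (t_k) ⋯ f (t₁)` over the simplex `0 ≤ t₁ ≤ ⋯ ≤ t_k ≤ x`. -/
noncomputable def transportTerm (f : ℝ → A) (k : ℕ) (x : ℝ) : A :=
  ∫ t in simplexSet k 0 x, ((List.ofFn fun i => f (t i)).reverse).prod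

/-- The parallel transport `T x = ∑_{k ≥ 0} ∫_{0 ≤ t₁ ≤ ⋯ ≤ t_k ≤ x} f t_k ⋯ f t₁ dt`. -/
noncomputable def transport (f : ℝ → A) (x : ℝ) : A :=
  ∑' k : ℕ, transportTerm f k x

/-! Splitting off the largest variable `t_k = s` of the simplex, Fubini turns the terms into a
Volterra recursion `T₀ = 1`, `T_{k+1}(x) = ∫₀ˣ f(s) T_k(s) ds`. Inductively
`‖T_k(y)‖ ≤ ‖1‖ (M y)^k / k!` for `y ∈ [0, b]`, where `M` bounds `‖f‖` on `[0, b]`, so the series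
converges absolutely and locally uniformly. Summing the recursion under the integral (dominated
convergence) gives `T(x) = 1 + ∫₀ˣ f(s) T(s) ds`, and the fundamental theorem of calculus gives
`T' = f T`. -/

open scoped Topology Nat

lemma monotone_snoc_iff {α : Type*} [Preorder α] {n : ℕ} {u : Fin n → α} {s : α} :
    Monotone (Fin.snoc u s : Fin (n + 1) → α) ↔ Monotone u ∧ ∀ i, u i ≤ s := by
  refine ⟨fun h => ⟨fun i j hij => ?_, fun i => ?_⟩, fun ⟨hu, hs⟩ i j hij => ?_⟩
  · simpa using h (Fin.castSucc_le_castSucc_iff.2 hij)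
  · simpa using h (Fin.le_last i.castSucc)
  · induction j using Fin.lastCases with
    | last =>
      induction i using Fin.lastCases with
      | last => exact le_rfl
      | cast i => simpa using hs i
    | cast j =>
      induction i using Fin.lastCases with
      | last => exact absurd hij (not_le.2 (Fin.castSucc_lt_last j))
      | cast i => simpa using hu (Fin.castSucc_le_castSucc_iff.1 hij)

lemma snoc_mem_simplexSet_succ_iff {k : ℕ} {a b s : ℝ} {u : Fin k → ℝ} :
    Fin.snoc u s ∈ simplexSet (k + 1) a b ↔ s ∈ Set.Icc a b ∧ u ∈ simplexSet k a s := by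
  simp only [simplexSet, Set.mem_ofPred_eq, monotone_snoc_iff, Fin.forall_fin_succ',
    Fin.snoc_castSucc, Fin.snoc_last, Set.mem_Icc]
  grind

lemma isClosed_simplexSet (k : ℕ) (a b : ℝ) : IsClosed (simplexSet k a b) := by
  simp only [simplexSet, Set.ofPred_and, Monotone, Set.ofPred_forall]
  exact (isClosed_iInter fun i => isClosed_iInter fun j => isClosed_iInter fun _ =>
      isClosed_le (continuous_apply i) (continuous_apply j)).inter
    (isClosed_iInter fun i => isClosed_Icc.preimage (continuous_apply i))

lemma isCompact_simplexSet (k : ℕ) (a b : ℝ) : IsCompact (simplexSet k a b) :=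
  (isCompact_univ_pi fun _ => isCompact_Icc).of_isClosed_subset (isClosed_simplexSet k a b)
    fun _ ht i _ => ht.2 i

lemma measurableSet_simplexSet (k : ℕ) (a b : ℝ) : MeasurableSet (simplexSet k a b) :=
  (isClosed_simplexSet k a b).measurableSet

lemma prod_reverse_ofFn_succ {M : Type*} [Monoid M] {k : ℕ} (g : Fin (k + 1) → M) :
    (List.ofFn g).reverse.prod =
      g (Fin.last k) * (List.ofFn fun i => g i.castSucc).reverse.prod := by
  simp only [List.ofFn_succ', List.concat_eq_append, List.reverse_append, List.reverse_singleton,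
    List.singleton_append, List.prod_cons]

lemma continuous_prod_reverse_ofFn {X M : Type*} [TopologicalSpace X] [Monoid M]
    [TopologicalSpace M] [ContinuousMul M] {k : ℕ} {g : Fin k → X → M}
    (hg : ∀ i, Continuous (g i)) :
    Continuous fun x => (List.ofFn fun i => g i x).reverse.prod := by
  induction k with
  | zero => simpa using continuous_const
  | succ k ih =>
    simp only [prod_reverse_ofFn_succ]
    exact (hg _).mul (ih fun i => hg i.castSucc)

theorem setIntegral_simplexSet_succ {E : Type*} [NormedAddCommGroup E] [NormedSpace ℝ E]
    {k : ℕ} {a b : ℝ} (hab : a ≤ b) {F : (Fin (k + 1) → ℝ) → E}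
    (hF : IntegrableOn F (simplexSet (k + 1) a b)) :
    ∫ t in simplexSet (k + 1) a b, F t =
      ∫ s in a..b, ∫ u in simplexSet k a s, F (Fin.snoc u s) := by
  set e : ℝ × (Fin k → ℝ) ≃ᵐ (Fin (k + 1) → ℝ) :=
    (MeasurableEquiv.piFinSuccAbove (fun _ : Fin (k + 1) => ℝ) (Fin.last k)).symm
  have he : ∀ p, e p = Fin.snoc p.2 p.1 := fun p => by
    simp [e, MeasurableEquiv.piFinSuccAbove_symm_apply, Fin.insertNthEquiv]
  have hpres : MeasurePreserving e (volume.prod volume) volume := by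
    rw [← Measure.volume_eq_prod]
    exact (volume_preserving_piFinSuccAbove (fun _ : Fin (k + 1) => ℝ) (Fin.last k)).symm
  set P := e ⁻¹' simplexSet (k + 1) a b
  have hP : MeasurableSet P := (measurableSet_simplexSet _ a b).preimage e.measurable
  have hmem : ∀ s u, (s, u) ∈ P ↔ s ∈ Set.Icc a b ∧ u ∈ simplexSet k a s := fun s u => by
    rw [Set.mem_preimage, he]
    exact snoc_mem_simplexSet_succ_iff
  have hfiber : ∀ s, ∫ u, P.indicator (fun p => F (e p)) (s, u) =
      (Set.Icc a b).indicator (fun s => ∫ u in simplexSet k a s, F (Fin.snoc u s)) s := by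
    intro s
    by_cases hs : s ∈ Set.Icc a b
    · rw [Set.indicator_of_mem hs, ← integral_indicator (measurableSet_simplexSet k a s)]
      congr 1 with u
      by_cases hu : u ∈ simplexSet k a s
      · rw [Set.indicator_of_mem ((hmem s u).2 ⟨hs, hu⟩), Set.indicator_of_mem hu, he]
      · rw [Set.indicator_of_notMem (fun h => hu ((hmem s u).1 h).2), Set.indicator_of_notMem hu]
    · rw [Set.indicator_of_notMem hs]
      simp_rw [Set.indicator_of_notMem (fun h => hs ((hmem s _).1 h).1), integral_zero]
  rw [← hpres.setIntegral_preimage_emb e.measurableEmbedding, ← integral_indicator hP,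
    integral_prod (P.indicator fun p => F (e p)) ((integrable_indicator_iff hP).2
      ((hpres.integrableOn_comp_preimage e.measurableEmbedding).2 hF))]
  simp_rw [hfiber]
  rw [integral_indicator measurableSet_Icc, integral_Icc_eq_integral_Ioc,
    ← intervalIntegral.integral_of_le hab]

lemma Icc_mem_nhdsWithin_Ici_of_lt {α : Type*} [LinearOrder α] [TopologicalSpace α]
    [OrderTopology α] {a b x : α} (hxb : x < b) : Set.Icc a b ∈ 𝓝[Set.Ici a] x :=
  Set.Ici_inter_Iic (a := a) ▸ inter_mem_nhdsWithin _ (Iic_mem_nhds hxb)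

theorem hasDerivWithinAt_integral_Ici {E : Type*} [NormedAddCommGroup E] [NormedSpace ℝ E]
    [CompleteSpace E] {h : ℝ → E} {a x : ℝ} (hh : ContinuousOn h (Set.Ici a)) (hx : a ≤ x) :
    HasDerivWithinAt (fun y => ∫ s in a..y, h s) (h x) (Set.Ici a) x := by
  have hxI : x ∈ Set.Icc a (x + 1) := ⟨hx, by linarith⟩
  -- `FTCFilter` needs a bounded interval around `x`; `Icc a (x + 1)` agrees with `Ici a` near `x`.
  have : Fact (x ∈ Set.Icc a (x + 1)) := ⟨hxI⟩
  have hhI : ContinuousOn h (Set.Icc a (x + 1)) := hh.mono Set.Icc_subset_Ici_self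
  have hint : IntervalIntegrable h volume a x :=
    (hh.mono (Set.uIcc_of_le hx ▸ Set.Icc_subset_Ici_self)).intervalIntegrable
  exact (intervalIntegral.integral_hasDerivWithinAt_right hint
    (hhI.stronglyMeasurableAtFilter_nhdsWithin measurableSet_Icc x)
    (hhI x hxI)).mono_of_mem_nhdsWithin (Icc_mem_nhdsWithin_Ici_of_lt (lt_add_one x))

lemma transportTerm_zero (f : ℝ → A) (x : ℝ) : transportTerm f 0 x = 1 := by
  have : simplexSet 0 0 x = Set.univ :=
    Set.eq_univ_of_forall fun _ => ⟨fun i => i.elim0, fun i => i.elim0⟩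
  simp only [transportTerm, this, Measure.restrict_univ, List.ofFn_zero, List.reverse_nil,
    List.prod_nil]
  rw [integral_const, measureReal_def, volume_pi, Measure.pi_univ]
  simp

omit [CompleteSpace A] in
lemma transportTerm_succ {f : ℝ → A} (hf : Continuous f) (k : ℕ) {x : ℝ} (hx : 0 ≤ x) :
    transportTerm f (k + 1) x = ∫ s in (0 : ℝ)..x, f s * transportTerm f k s := by
  have hcont : ∀ n, Continuous fun t : Fin n → ℝ => (List.ofFn fun i => f (t i)).reverse.prod :=
    fun n => continuous_prod_reverse_ofFn fun i => hf.comp (continuous_apply i)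
  rw [transportTerm, setIntegral_simplexSet_succ hx
    ((hcont _).continuousOn.integrableOn_compact (isCompact_simplexSet _ _ _))]
  refine intervalIntegral.integral_congr fun s _ => ?_
  simp only [prod_reverse_ofFn_succ, Fin.snoc_last, Fin.snoc_castSucc]
  exact integral_const_mul_of_integrable
    ((hcont k).continuousOn.integrableOn_compact (isCompact_simplexSet _ _ _))

lemma continuousOn_transportTerm {f : ℝ → A} (hf : Continuous f) (k : ℕ) :
    ContinuousOn (transportTerm f k) (Set.Ici 0) := by
  induction k with
  | zero => simpa [funext (transportTerm_zero f)] using continuousOn_const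
  | succ k ih =>
    refine ContinuousOn.congr (fun x hx => ?_) fun y hy => transportTerm_succ hf k hy
    exact (hasDerivWithinAt_integral_Ici (hf.continuousOn.mul ih) hx).continuousWithinAt

lemma norm_transportTerm_le {f : ℝ → A} (hf : Continuous f) {b M : ℝ}
    (hM : ∀ s ∈ Set.Icc 0 b, ‖f s‖ ≤ M) (k : ℕ) {y : ℝ} (hy : y ∈ Set.Icc 0 b) :
    ‖transportTerm f k y‖ ≤ ‖(1 : A)‖ * ((M * y) ^ k / k !) := by
  induction k generalizing y with
  | zero => simp [transportTerm_zero]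
  | succ k ih =>
    have hM0 : 0 ≤ M := (norm_nonneg _).trans (hM y hy)
    have hbound : ∀ s ∈ Set.Ioc 0 y,
        ‖f s * transportTerm f k s‖ ≤ M * (‖(1 : A)‖ * ((M * s) ^ k / k !)) := fun s hs => by
      have hs' : s ∈ Set.Icc 0 b := ⟨hs.1.le, hs.2.trans hy.2⟩
      exact (norm_mul_le _ _).trans (mul_le_mul (hM s hs') (ih hs') (norm_nonneg _) hM0)
    calc ‖transportTerm f (k + 1) y‖
        ≤ ∫ s in (0 : ℝ)..y, M * (‖(1 : A)‖ * ((M * s) ^ k / k !)) := by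
          rw [transportTerm_succ hf k hy.1]
          exact intervalIntegral.norm_integral_le_of_norm_le hy.1 (ae_of_all _ hbound)
            ((by fun_prop : Continuous _).intervalIntegrable _ _)
      _ = ‖(1 : A)‖ * ((M * y) ^ (k + 1) / (k + 1)!) := by
          have hk : (k ! : ℝ) ≠ 0 := by positivity
          simp only [mul_pow, mul_div_assoc', intervalIntegral.integral_div,
            intervalIntegral.integral_const_mul, integral_pow, Nat.factorial_succ]
          push_cast
          field_simp
          ring

lemma norm_transportTerm_le_of_mem_Icc {f : ℝ → A} (hf : Continuous f) {b M : ℝ}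
    (hM : ∀ s ∈ Set.Icc 0 b, ‖f s‖ ≤ M) (k : ℕ) {y : ℝ} (hy : y ∈ Set.Icc 0 b) :
    ‖transportTerm f k y‖ ≤ ‖(1 : A)‖ * ((M * b) ^ k / k !) := by
  have hM0 : 0 ≤ M := (norm_nonneg _).trans (hM y hy)
  refine (norm_transportTerm_le hf hM k hy).trans ?_
  gcongr
  · exact mul_nonneg hM0 hy.1
  · exact hy.2

lemma summable_norm_transportTerm {f : ℝ → A} (hf : Continuous f) {x : ℝ} (hx : 0 ≤ x) :
    Summable fun k => ‖transportTerm f k x‖ := by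
  obtain ⟨M, hM⟩ := (isCompact_Icc (a := 0) (b := x)).exists_bound_of_continuousOn
    hf.continuousOn
  exact .of_nonneg_of_le (fun _ => norm_nonneg _)
    (fun k => norm_transportTerm_le_of_mem_Icc hf hM k ⟨hx, le_rfl⟩)
    ((Real.summable_pow_div_factorial _).mul_left _)

lemma continuousOn_transport {f : ℝ → A} (hf : Continuous f) :
    ContinuousOn (transport f) (Set.Ici 0) := by
  intro x hx
  obtain ⟨M, hM⟩ :=
    (isCompact_Icc (a := 0) (b := x + 1)).exists_bound_of_continuousOn hf.continuousOn
  have hIcc : ContinuousOn (transport f) (Set.Icc 0 (x + 1)) :=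
    continuousOn_tsum (fun k => (continuousOn_transportTerm hf k).mono Set.Icc_subset_Ici_self)
      ((Real.summable_pow_div_factorial _).mul_left _)
      fun k _ hy => norm_transportTerm_le_of_mem_Icc hf hM k hy
  exact (hIcc x ⟨hx, by linarith⟩).mono_of_mem_nhdsWithin
    (Icc_mem_nhdsWithin_Ici_of_lt (lt_add_one x))

lemma hasSum_integral_mul_transportTerm {f : ℝ → A} (hf : Continuous f) {x : ℝ} (hx : 0 ≤ x) :
    HasSum (fun k => ∫ s in (0 : ℝ)..x, f s * transportTerm f k s)
      (∫ s in (0 : ℝ)..x, f s * transport f s) := by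
  obtain ⟨M, hM⟩ := (isCompact_Icc (a := 0) (b := x)).exists_bound_of_continuousOn
    hf.continuousOn
  refine intervalIntegral.hasSum_integral_of_dominated_convergence
    (fun k _ => M * (‖(1 : A)‖ * ((M * x) ^ k / k !))) (fun k => ?_) (fun k => ?_)
    (ae_of_all _ fun _ _ => ((Real.summable_pow_div_factorial _).mul_left _).mul_left _)
    intervalIntegrable_const ?_
  all_goals rw [Set.uIoc_of_le hx]
  · exact ((hf.continuousOn.mul (continuousOn_transportTerm hf k)).mono
      fun y hy => hy.1.le).aestronglyMeasurable measurableSet_Ioc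
  · refine ae_of_all _ fun y hy => (norm_mul_le _ _).trans ?_
    have hy' : y ∈ Set.Icc 0 x := ⟨hy.1.le, hy.2⟩
    exact mul_le_mul (hM y hy') (norm_transportTerm_le_of_mem_Icc hf hM k hy') (norm_nonneg _)
      ((norm_nonneg _).trans (hM y hy'))
  · exact ae_of_all _ fun y hy =>
      ((summable_norm_transportTerm hf hy.1.le).of_norm.hasSum).mul_left (f y)

theorem transport_eq_one_add_integral {f : ℝ → A} (hf : Continuous f) {x : ℝ} (hx : 0 ≤ x) :
    transport f x = 1 + ∫ s in (0 : ℝ)..x, f s * transport f s := by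
  have hsucc : HasSum (fun k => transportTerm f (k + 1) x)
      (∫ s in (0 : ℝ)..x, f s * transport f s) := by
    simpa only [transportTerm_succ hf _ hx] using hasSum_integral_mul_transportTerm hf hx
  have h := (HasSum.zero_add (f := (transportTerm f · x)) hsucc).tsum_eq
  rwa [transportTerm_zero] at h

/-- The iterated-integral series solves the parallel transport equation: for a continuous
`f : ℝ → A`, the series converges absolutely for every `x ≥ 0`, `T 0 = 1`, and
`T' x = f x * T x` for all `x ≥ 0` (derivative within `[0, ∞)`). -/
theorem transport_solves_transport_equation (f : ℝ → A) (hf : Continuous f) :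
    (∀ x : ℝ, 0 ≤ x → Summable fun k : ℕ => ‖transportTerm f k x‖) ∧
    transport f 0 = 1 ∧
    (∀ x : ℝ, 0 ≤ x →
      HasDerivWithinAt (transport f) (f x * transport f x) (Set.Ici 0) x) := by
  refine ⟨fun x hx => summable_norm_transportTerm hf hx, ?_, fun x hx => ?_⟩
  · simpa using transport_eq_one_add_integral hf le_rfl
  · have hprim := hasDerivWithinAt_integral_Ici (hf.continuousOn.mul (continuousOn_transport hf)) hx
    exact (hprim.const_add 1).congr (fun y hy => transport_eq_one_add_integral hf hy)
      (transport_eq_one_add_integral hf hx)
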